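/- For all integers n ≥ m ≥ 1, the following identity holds in the polynomial ring ℝ[x,y]: (∂_x − ∂_y)( x^n y^m + y^n x^m ) = (x − y) · [ (n−m) Σ_{k=1}^{n−m−1} x^{n−1−k} y^{m−1+k} − m x^{n−1} y^{m−1} − m y^{n−1} x^{m−1} ], where the sum Σ_{k=1}^{n−m−1} is empty (equal to 0) when n ≤ m + 1. -/

import Mathlib

/-! Expanding the left side by the Leibniz rule leaves a polynomial identity in `x, y` once one
knows that the sum telescopes: `(x - y) * ∑ = x ^ (n - 1) * y ^ m - x ^ m * y ^ (n - 1)`. -/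

open MvPolynomial

section Telescoping

variable {R : Type*} [CommRing R]

lemma sub_mul_sum_Icc_pow_mul_pow (x y : R) {m n : ℕ} (hm : 1 ≤ m) (hmn : m < n) :
    (x - y) * ∑ k ∈ Finset.Icc 1 (n - m - 1), x ^ (n - 1 - k) * y ^ (m - 1 + k) =
      x ^ (n - 1) * y ^ m - x ^ m * y ^ (n - 1) := by
  set f : ℕ → R := fun k ↦ x ^ (n - k) * y ^ (m - 1 + k)
  have hstep : ∀ k ∈ Finset.Ico 1 (n - m),
      (x - y) * (x ^ (n - 1 - k) * y ^ (m - 1 + k)) = -(f (k + 1) - f k) := by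
    intro k hk
    rw [Finset.mem_Ico] at hk
    have hj : n - k = n - 1 - k + 1 := by omega
    simp only [f, hj, show n - (k + 1) = n - 1 - k by omega,
      show m - 1 + (k + 1) = m - 1 + k + 1 by omega]
    ring
  rw [← Finset.Ico_add_one_right_eq_Icc, Nat.sub_add_cancel (by omega), Finset.mul_sum,
    Finset.sum_congr rfl hstep, Finset.sum_neg_distrib, Finset.sum_Ico_sub _ (by omega)]
  simp only [f, show n - (n - m) = m by omega, show m - 1 + (n - m) = n - 1 by omega,
    show m - 1 + 1 = m by omega]
  ring

end Telescoping

section PartialDerivatives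

variable {R σ : Type*} [CommSemiring R] {i j : σ}

lemma pderiv_X_pow_mul_X_pow_left (hij : i ≠ j) (a b : ℕ) :
    pderiv i (X i ^ a * X j ^ b : MvPolynomial σ R) =
      (a : MvPolynomial σ R) * X i ^ (a - 1) * X j ^ b := by
  simp only [Derivation.leibniz, Derivation.leibniz_pow, pderiv_X_self, pderiv_X_of_ne hij.symm,
    smul_eq_mul, nsmul_eq_mul, mul_zero, mul_one, zero_add]
  ring

lemma pderiv_X_pow_mul_X_pow_right (hij : i ≠ j) (a b : ℕ) :
    pderiv j (X i ^ a * X j ^ b : MvPolynomial σ R) =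
      (b : MvPolynomial σ R) * X i ^ a * X j ^ (b - 1) := by
  simp only [Derivation.leibniz, Derivation.leibniz_pow, pderiv_X_self, pderiv_X_of_ne hij,
    smul_eq_mul, nsmul_eq_mul, mul_zero, mul_one, add_zero]
  ring

end PartialDerivatives

theorem stmt_11 (n m : ℕ) (hm : 1 ≤ m) (hnm : m ≤ n) :
    pderiv 0 ((X 0 : MvPolynomial (Fin 2) ℝ) ^ n * X 1 ^ m + X 1 ^ n * X 0 ^ m) -
      pderiv 1 ((X 0 : MvPolynomial (Fin 2) ℝ) ^ n * X 1 ^ m + X 1 ^ n * X 0 ^ m) =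
    (X 0 - X 1) *
      (C ((n : ℝ) - (m : ℝ)) *
          (∑ k ∈ Finset.Icc 1 (n - m - 1), X 0 ^ (n - 1 - k) * X 1 ^ (m - 1 + k))
        - C (m : ℝ) * (X 0 ^ (n - 1) * X 1 ^ (m - 1))
        - C (m : ℝ) * (X 1 ^ (n - 1) * X 0 ^ (m - 1))) := by
  have h01 : (0 : Fin 2) ≠ 1 := by decide
  simp only [map_add, pderiv_X_pow_mul_X_pow_left h01, pderiv_X_pow_mul_X_pow_right h01,
    pderiv_X_pow_mul_X_pow_left h01.symm, pderiv_X_pow_mul_X_pow_right h01.symm, map_sub,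
    map_natCast]
  rcases hnm.eq_or_lt with rfl | hlt
  · obtain ⟨m, rfl⟩ := Nat.exists_eq_add_of_le' hm
    simp only [Nat.add_sub_cancel]
    ring
  · have hsum := sub_mul_sum_Icc_pow_mul_pow (X 0 : MvPolynomial (Fin 2) ℝ) (X 1) hm hlt
    obtain ⟨m, rfl⟩ := Nat.exists_eq_add_of_le' hm
    obtain ⟨n, rfl⟩ := Nat.exists_eq_add_of_le' (hm.trans hnm)
    simp only [Nat.add_sub_cancel] at hsum ⊢
    linear_combination ((m + 1 : ℕ) - (n + 1 : ℕ) : MvPolynomial (Fin 2) ℝ) * hsum
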